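/- For every Boolean function f : {0,1}^n × {0,1}^n → {0,1} and every ε ∈ [0, 1/2), the public-coin randomized one-way communication complexity satisfies R^{1,pub}_ε(f) ≤ (s+1) · ⌈log₂(s+1)⌉, where s = GH_ε(f): any randomized garden-hose protocol of size s for f with error ε yields a public-coin one-way protocol of the same error in which Alice sends an encoding of her connections E_A(x, r). -/
import Mathlib


/-- A partial matching on the vertex type `V`, encoded by a partner function:
`m i = some j` means that there is an edge between `i` and `j`;
the graph `{ {i,j} | m i = some j }` then has maximum degree at most `1`
and no self-loops. -/
def IsPartialMatching {V : Type*} (m : V → Option V) : Prop :=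
  ∀ i j, m i = some j → i ≠ j ∧ m j = some i

/-- The position of the water in a garden-hose game with `s` pipes:
`atAlice i` (resp. `atBob i`) means the water has just arrived at Alice's
(resp. Bob's) end of pipe `i`; `exitA` / `exitB` mean the water has exited
on Alice's / Bob's side, i.e. the maximal path starting at the tap has ended
in `A∘` / in `B`. -/
inductive GHState (s : ℕ) where
  | atAlice : Fin s → GHState s
  | atBob : Fin s → GHState s
  | exitA : GHState s
  | exitB : GHState s
  deriving DecidableEq

/-- Vertex `k` of `A∘ = {0, 1, ..., s}` viewed as a pipe: vertex `0` is the water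
tap (no pipe), and vertex `i + 1` is Alice's end of pipe `i`. -/
def toPipe {s : ℕ} (k : Fin (s + 1)) : Option (Fin s) :=
  if h : (k : ℕ) = 0 then none
  else some ⟨(k : ℕ) - 1, by have := k.isLt; omega⟩

/-- One step of the water flow, given Alice's connections `a` on `A∘ = {0,...,s}`
and Bob's connections `b` on `B = {1,...,s}` (indexed by pipes `Fin s`). -/
def ghStep {s : ℕ} (a : Fin (s + 1) → Option (Fin (s + 1)))
    (b : Fin s → Option (Fin s)) : GHState s → GHState s
  | GHState.atAlice i =>
    match a i.succ with
    | none => GHState.exitA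
    | some k =>
      match toPipe k with
      | none => GHState.exitA
      | some p => GHState.atBob p
  | GHState.atBob i =>
    match b i with
    | none => GHState.exitB
    | some j => GHState.atAlice j
  | GHState.exitA => GHState.exitA
  | GHState.exitB => GHState.exitB

/-- The start of the water flow: the tap (vertex `0` of `A∘`) is connected by
Alice to at most one pipe. -/
def ghStart {s : ℕ} (a : Fin (s + 1) → Option (Fin (s + 1))) : GHState s :=
  match a 0 with
  | none => GHState.exitA
  | some k =>
    match toPipe k with
    | none => GHState.exitA
    | some p => GHState.atBob p

/-- The endpoint of the maximal path `π(x,y)` starting at the tap: since the graph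
has maximum degree `2` and the path is simple, it is reached after at most
`2s + 2` steps. -/
def ghResult {s : ℕ} (a : Fin (s + 1) → Option (Fin (s + 1)))
    (b : Fin s → Option (Fin s)) : GHState s :=
  (ghStep a b)^[2 * s + 2] (ghStart a)

/-- A garden-hose game of size `s` on inputs `{0,1}^n × {0,1}^n`: for every input
`x` Alice chooses a partial matching `EA x` on `A∘ = {0,1,…,s}` and for every
input `y` Bob chooses a partial matching `EB y` on `B = {1,…,s}`. -/
structure GHGame (n s : ℕ) where
  EA : (Fin n → Bool) → Fin (s + 1) → Option (Fin (s + 1))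
  EB : (Fin n → Bool) → Fin s → Option (Fin s)
  matchA : ∀ x, IsPartialMatching (EA x)
  matchB : ∀ y, IsPartialMatching (EB y)

/-- Where the water exits on input `(x, y)`. -/
def GHGame.run {n s : ℕ} (G : GHGame n s) (x y : Fin n → Bool) : GHState s :=
  ghResult (G.EA x) (G.EB y)

/-- The game `G` computes `f` if for all inputs the maximal path from the tap ends
in `A∘` whenever `f x y = 0` (water exits on Alice's side) and in `B` whenever
`f x y = 1` (water exits on Bob's side). -/
def GHGame.Computes {n s : ℕ} (G : GHGame n s)
    (f : (Fin n → Bool) → (Fin n → Bool) → Bool) : Prop :=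
  ∀ x y, G.run x y = if f x y then GHState.exitB else GHState.exitA

/-- The garden-hose complexity of `f`: the minimal number of pipes of a
garden-hose game computing `f`. -/
noncomputable def GH {n : ℕ} (f : (Fin n → Bool) → (Fin n → Bool) → Bool) : ℕ :=
  sInf {s : ℕ | ∃ G : GHGame n s, G.Computes f}
/-- A randomized garden-hose protocol of size `s` for `f` with error `ε`:
a finite set (indexed by `Fin k`) equipped with a probability distribution
`prob` and, for each random string `r`, a garden-hose game `game r` of size `s`
such that for every input `(x, y)` the probability over `r` that `game r`
computes the value `f x y` at `(x, y)` is at least `1 - ε`. -/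
structure RandGHProtocol (n s : ℕ) (f : (Fin n → Bool) → (Fin n → Bool) → Bool)
    (ε : ℝ) where
  k : ℕ
  prob : Fin k → ℝ
  prob_nonneg : ∀ r, 0 ≤ prob r
  prob_sum : ∑ r, prob r = 1
  game : Fin k → GHGame n s
  correct : ∀ x y, 1 - ε ≤ ∑ r,
    if (game r).run x y = (if f x y then GHState.exitB else GHState.exitA)
    then prob r else 0

/-- The randomized garden-hose complexity `GH_ε(f)`: the minimal size of a
randomized garden-hose protocol for `f` with error `ε`. -/
noncomputable def GHr {n : ℕ} (ε : ℝ)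
    (f : (Fin n → Bool) → (Fin n → Bool) → Bool) : ℕ :=
  sInf {s : ℕ | Nonempty (RandGHProtocol n s f ε)}

/-- A public-coin randomized one-way communication protocol for `f` with message
length `m` and error `ε`: a finite set (indexed by `Fin k`) with a probability
distribution `prob`, message functions `amsg r : {0,1}^n → {0,1}^m` for Alice,
and output functions `out r : {0,1}^m × {0,1}^n → {0,1}` for Bob, such that for
every input `(x, y)` the probability over `r` that `out r (amsg r x) y = f x y`
is at least `1 - ε`. -/
structure PubCoinOneWayProtocol (n m : ℕ)
    (f : (Fin n → Bool) → (Fin n → Bool) → Bool) (ε : ℝ) where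
  k : ℕ
  prob : Fin k → ℝ
  prob_nonneg : ∀ r, 0 ≤ prob r
  prob_sum : ∑ r, prob r = 1
  amsg : Fin k → (Fin n → Bool) → Fin m → Bool
  out : Fin k → (Fin m → Bool) → (Fin n → Bool) → Bool
  correct : ∀ x y, 1 - ε ≤ ∑ r, if out r (amsg r x) y = f x y then prob r else 0

/-- The public-coin randomized one-way communication complexity `R¹ᵖᵘᵇ_ε(f)`. -/
noncomputable def R1pub {n : ℕ} (ε : ℝ)
    (f : (Fin n → Bool) → (Fin n → Bool) → Bool) : ℕ :=
  sInf {m : ℕ | Nonempty (PubCoinOneWayProtocol n m f ε)}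


section Aux

lemma toPipe_succ {s : ℕ} (p : Fin s) : toPipe p.succ = some p := by
  have h : ((p.succ : Fin (s+1)) : ℕ) = (p : ℕ) + 1 := Fin.val_succ p
  rw [toPipe, dif_neg (by omega)]
  congr 1

lemma ghResult_eq {s : ℕ} (a : Fin (s+1) → Option (Fin (s+1)))
    (b : Fin s → Option (Fin s)) (e : GHState s) (m : ℕ) (hm : m ≤ 2*s+2)
    (h : (ghStep a b)^[m] (ghStart a) = e) (he : ghStep a b e = e) :
    ghResult a b = e := by
  have h2 : 2*s+2 = (2*s+2-m) + m := by omega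
  rw [ghResult, h2, Function.iterate_add_apply, h, Function.iterate_fixed he]

lemma exists_randGH (n : ℕ) (f : (Fin n → Bool) → (Fin n → Bool) → Bool)
    (ε : ℝ) (hε0 : 0 ≤ ε) :
    Nonempty (RandGHProtocol n (2 * 2^n) f ε) := by
  classical
  obtain ⟨e2⟩ : Nonempty (Bool × (Fin n → Bool) ≃ Fin (2 * 2^n)) := by
    refine ⟨Fintype.equivFinOfCardEq ?_⟩
    simp [Fintype.card_fun]
  set s := 2 * 2^n with hs
  let EA : (Fin n → Bool) → Fin (s+1) → Option (Fin (s+1)) := fun x k =>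
    if k = 0 then some (e2 (false, x)).succ
    else if k = (e2 (false, x)).succ then some 0 else none
  let EB : (Fin n → Bool) → Fin s → Option (Fin s) := fun y p =>
    if f (e2.symm p).2 y then none
    else some (e2 (!(e2.symm p).1, (e2.symm p).2))
  have matchA : ∀ x, IsPartialMatching (EA x) := by
    intro x i j h
    by_cases hi : i = 0
    · subst hi
      simp only [EA, if_pos rfl, if_true, Option.some.injEq] at h
      subst h
      refine ⟨(Fin.succ_ne_zero _).symm, ?_⟩
      simp only [EA, if_neg (Fin.succ_ne_zero _), if_pos rfl, if_true]
    · by_cases hi2 : i = (e2 (false, x)).succ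
      · subst hi2
        simp only [EA, if_neg (Fin.succ_ne_zero _), if_pos rfl, if_true,
          Option.some.injEq] at h
        subst h
        refine ⟨Fin.succ_ne_zero _, ?_⟩
        simp only [EA, if_pos rfl, if_true]
      · simp [EA, hi, hi2] at h
  have matchB : ∀ y, IsPartialMatching (EB y) := by
    intro y p q h
    by_cases hf : f (e2.symm p).2 y
    · simp [EB, hf] at h
    · simp only [EB, if_neg hf, Option.some.injEq] at h
      subst h
      have hps : e2 (e2.symm p) = p := e2.apply_symm_apply p
      constructor
      · intro hpq
        have : (e2.symm p).1 = !(e2.symm p).1 := by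
          have := congrArg (fun z => (e2.symm z).1) hpq
          simpa using this
        exact (Bool.self_ne_not _) this
      · simp only [EB, Equiv.symm_apply_apply, Bool.not_not]
        rw [if_neg hf]
        exact congrArg some (e2.apply_symm_apply p)
  have hrun : ∀ x y,
      ghResult (EA x) (EB y) = if f x y then GHState.exitB else GHState.exitA := by
    intro x y
    have hstart : ghStart (EA x) = GHState.atBob (e2 (false, x)) := by
      simp only [ghStart, EA, if_pos rfl, toPipe_succ]
    by_cases hf : f x y
    · rw [if_pos hf]
      refine ghResult_eq _ _ _ 1 (by omega) ?_ rfl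
      rw [Function.iterate_one, hstart]
      simp [ghStep, EB, hf]
    · rw [if_neg hf]
      refine ghResult_eq _ _ _ 2 (by omega) ?_ rfl
      have h1 : ghStep (EA x) (EB y) (ghStart (EA x))
          = GHState.atAlice (e2 (true, x)) := by
        rw [hstart]
        simp [ghStep, EB, hf]
      have hne0 : (e2 (true, x)).succ ≠ (0 : Fin (s+1)) := Fin.succ_ne_zero _
      have hne1 : (e2 (true, x)).succ ≠ (e2 (false, x)).succ := by
        intro hcontra
        have := Fin.succ_injective _ hcontra
        have := e2.injective this
        simp at this
      have h2 : ghStep (EA x) (EB y) (GHState.atAlice (e2 (true, x)))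
          = GHState.exitA := by
        simp only [ghStep, EA, if_neg hne0, if_neg hne1]
      calc (ghStep (EA x) (EB y))^[2] (ghStart (EA x))
          = ghStep (EA x) (EB y) (ghStep (EA x) (EB y) (ghStart (EA x))) := rfl
        _ = GHState.exitA := by rw [h1, h2]
  refine ⟨⟨1, fun _ => 1, fun _ => zero_le_one, by simp,
    fun _ => ⟨EA, EB, matchA, matchB⟩, ?_⟩⟩
  intro x y
  have : (⟨EA, EB, matchA, matchB⟩ : GHGame n s).run x y
      = (if f x y then GHState.exitB else GHState.exitA) := hrun x y
  simp only [Fin.sum_univ_one, this, if_pos rfl, if_true]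
  linarith

end Aux

/-- For every `f` and every `ε ∈ [0, 1/2)`, the public-coin randomized one-way
communication complexity satisfies
`R¹ᵖᵘᵇ_ε(f) ≤ (s + 1) · ⌈log₂ (s + 1)⌉` where `s = GH_ε(f)`. -/
theorem r1pub_le_ghr (n : ℕ)
    (f : (Fin n → Bool) → (Fin n → Bool) → Bool)
    (ε : ℝ) (hε0 : 0 ≤ ε) (hε1 : ε < 1 / 2) :
    R1pub ε f ≤ (GHr ε f + 1) * Nat.clog 2 (GHr ε f + 1) := by
  classical
  have hne : {s : ℕ | Nonempty (RandGHProtocol n s f ε)}.Nonempty :=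
    ⟨2 * 2^n, exists_randGH n f ε hε0⟩
  obtain ⟨P⟩ : Nonempty (RandGHProtocol n (GHr ε f) f ε) := Nat.sInf_mem hne
  set s := GHr ε f with hs
  set c := Nat.clog 2 (s+1) with hc
  obtain ⟨emb⟩ : Nonempty (Fin (s+1) ↪ (Fin c → Bool)) := by
    apply Function.Embedding.nonempty_of_card_le
    simp only [Fintype.card_fin, Fintype.card_fun, Fintype.card_bool]
    exact Nat.le_pow_clog one_lt_two _
  have hinv : ∀ v : Fin (s+1), Function.invFun emb (emb v) = v :=
    Function.leftInverse_invFun emb.injective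
  let dec : (Fin ((s+1)*c) → Bool) → Fin (s+1) → Option (Fin (s+1)) := fun msg i =>
    if Function.invFun emb (fun j => msg (finProdFinEquiv (i, j))) = i then none
    else some (Function.invFun emb (fun j => msg (finProdFinEquiv (i, j))))
  let am : Fin P.k → (Fin n → Bool) → Fin ((s+1)*c) → Bool := fun r x k =>
    emb (((P.game r).EA x (finProdFinEquiv.symm k).1).getD
      (finProdFinEquiv.symm k).1) (finProdFinEquiv.symm k).2
  have hdec : ∀ r x, dec (am r x) = (P.game r).EA x := by
    intro r x
    funext i
    have h1 : (fun j => am r x (finProdFinEquiv (i, j)))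
        = emb (((P.game r).EA x i).getD i) := by
      funext j
      simp only [am, Equiv.symm_apply_apply]
    simp only [dec, h1, hinv]
    rcases h : (P.game r).EA x i with _ | w
    · simp [h]
    · have hwi : i ≠ w := ((P.game r).matchA x i w h).1
      simp [h, Ne.symm hwi]
  have hQ : Nonempty (PubCoinOneWayProtocol n ((s+1)*c) f ε) := by
    refine ⟨⟨P.k, P.prob, P.prob_nonneg, P.prob_sum, am,
      fun r msg y =>
        decide (ghResult (dec msg) ((P.game r).EB y) = GHState.exitB), ?_⟩⟩
    intro x y
    refine le_trans (P.correct x y) (Finset.sum_le_sum ?_)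
    intro r _
    by_cases h : (P.game r).run x y = (if f x y then GHState.exitB else GHState.exitA)
    · rw [if_pos h, if_pos]
      have hr : ghResult (dec (am r x)) ((P.game r).EB y)
          = (if f x y then GHState.exitB else GHState.exitA) := by
        rw [hdec]; exact h
      cases hf : f x y
      · rw [hf, if_neg (Bool.false_ne_true)] at hr
        simp [hr]
      · rw [hf, if_pos rfl] at hr
        simp [hr]
    · rw [if_neg h]
      split
      · exact P.prob_nonneg r
      · exact le_refl 0
  have : (s+1) * c ∈ {m : ℕ | Nonempty (PubCoinOneWayProtocol n m f ε)} := hQ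
  exact Nat.sInf_le this
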